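/- arXiv:1105.1734 — 4 statements merged into one kernel-verified Lean document; each statement's English description precedes it below -/
import Mathlib

section
/- For symmetric n×n real matrices S, S' and a fixed antisymmetric n×n matrix N, the bracket [S,S']_N := S N S' - S' N S is again a symmetric matrix, and it satisfies the Jacobi identity, so (Sym(R^n), [·,·]_N) is a Lie algebra. -/
open Matrix

/-- The bracket `[S,S']_N := S N S' - S' N S` on `n × n` real matrices. -/
def brN {n : ℕ} (N S S' : Matrix (Fin n) (Fin n) ℝ) : Matrix (Fin n) (Fin n) ℝ :=
  S * N * S' - S' * N * S

section brN

variable {n : ℕ} (N S T U : Matrix (Fin n) (Fin n) ℝ)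

theorem transpose_brN : (brN N S T)ᵀ = brN Nᵀ Tᵀ Sᵀ := by
  simp only [brN, transpose_sub, transpose_mul, Matrix.mul_assoc]

theorem brN_neg_swap : brN (-N) T S = brN N S T := by
  simp only [brN, Matrix.mul_neg, Matrix.neg_mul, sub_neg_eq_add, neg_add_eq_sub]

/-- `brN N` is the commutator of the associative product `S ⋆ T := S * N * T`. -/
theorem brN_jacobi :
    brN N (brN N S T) U + brN N (brN N T U) S + brN N (brN N U S) T = 0 := by
  simp only [brN]
  noncomm_ring

end brN

/-- For symmetric `S, S'` and antisymmetric `N`, the bracket `[S,S']_N = S N S' - S' N S`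
is again symmetric, and it satisfies the Jacobi identity; hence the symmetric matrices with
this bracket form a Lie algebra. -/
theorem symm_bracket_closed_and_jacobi (n : ℕ) (N : Matrix (Fin n) (Fin n) ℝ)
    (hN : Nᵀ = -N) :
    (∀ S S' : Matrix (Fin n) (Fin n) ℝ, Sᵀ = S → S'ᵀ = S' →
      (brN N S S')ᵀ = brN N S S') ∧
    (∀ S T U : Matrix (Fin n) (Fin n) ℝ, Sᵀ = S → Tᵀ = T → Uᵀ = U →
      brN N (brN N S T) U + brN N (brN N T U) S + brN N (brN N U S) T = 0) := by
  refine ⟨fun S S' hS hS' => ?_, fun S T U _ _ _ => brN_jacobi N S T U⟩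
  rw [transpose_brN, hN, hS, hS', brN_neg_swap]
end

section
/- For any antisymmetric bilinear form N̄ (i.e., an invertible 2k×2k antisymmetric matrix) and corank d, the map Ψ(S,A,B) := the block matrix [[S, A^T],[A, 2B]] is a Lie algebra isomorphism from (Sym(R^{2k}) ⋉ M_{d×2k}) ×_C Sym(R^d), with bracket [(S,A,B),(S',A',B')] = ([S,S']_{N̄}, A N̄ S' - A' N̄ S, (A N̄ A'^T)^{sym}), onto (Sym(R^{2k+d}), [·,·]_N) where N = diag(N̄, 0). -/
/-!
With `N = diag(N̄, 0)` the product `Ψ(S,A,B) N Ψ(S',A',B')` has blocks `S N̄ S'`, `S N̄ A'ᵀ`,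
`A N̄ S'`, `A N̄ A'ᵀ`, so the `N`-bracket is computed blockwise. Antisymmetry of `N̄` identifies
the transpose of the lower-left block `A N̄ S' - A' N̄ S` with the upper-right one, and makes the
lower-right block `A N̄ A'ᵀ - A' N̄ Aᵀ` equal to twice the symmetric part of `A N̄ A'ᵀ`, which is
where the factor `2` in `Ψ` comes from. Bijectivity onto symmetric matrices is reading off blocks.
-/

open Matrix

/-- The symmetric part of a square matrix. -/
noncomputable def symPart {d : ℕ} (M : Matrix (Fin d) (Fin d) ℝ) : Matrix (Fin d) (Fin d) ℝ :=
  (1 / 2 : ℝ) • (M + Mᵀ)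

/-- The map `Ψ(S, A, B) = [[S, Aᵀ], [A, 2B]]`. -/
noncomputable def PsiBI {k d : ℕ} (S : Matrix (Fin (2 * k)) (Fin (2 * k)) ℝ)
    (A : Matrix (Fin d) (Fin (2 * k)) ℝ) (B : Matrix (Fin d) (Fin d) ℝ) :
    Matrix (Fin (2 * k) ⊕ Fin d) (Fin (2 * k) ⊕ Fin d) ℝ :=
  Matrix.fromBlocks S Aᵀ A ((2 : ℝ) • B)

namespace Matrix

variable {l m n o : Type*} {R : Type*}

theorem fromBlocks_sub [AddGroup R] (A A' : Matrix n l R) (B B' : Matrix n m R)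
    (C C' : Matrix o l R) (D D' : Matrix o m R) :
    fromBlocks A B C D - fromBlocks A' B' C' D' =
      fromBlocks (A - A') (B - B') (C - C') (D - D') := by
  simp only [sub_eq_add_neg, fromBlocks_neg, fromBlocks_add]

theorem transpose_mul_mul_of_transpose_eq_neg [Fintype n] [CommRing R] {N : Matrix n n R}
    (hN : Nᵀ = -N) (X : Matrix l n R) (Y : Matrix n m R) :
    (X * N * Y)ᵀ = -(Yᵀ * N * Xᵀ) := by
  rw [transpose_mul, transpose_mul, hN, Matrix.neg_mul, Matrix.mul_neg, Matrix.mul_assoc]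

end Matrix

theorem two_smul_symPart {d : ℕ} (M : Matrix (Fin d) (Fin d) ℝ) :
    (2 : ℝ) • symPart M = M + Mᵀ := by
  rw [symPart, smul_smul]
  norm_num

section PsiBI

variable {k d : ℕ}

theorem transpose_PsiBI (S : Matrix (Fin (2 * k)) (Fin (2 * k)) ℝ)
    (A : Matrix (Fin d) (Fin (2 * k)) ℝ) (B : Matrix (Fin d) (Fin d) ℝ) :
    (PsiBI S A B)ᵀ = PsiBI Sᵀ A Bᵀ := by
  simp [PsiBI, fromBlocks_transpose, transpose_smul]

theorem PsiBI_mul_fromBlocks_mul_PsiBI (N S S' : Matrix (Fin (2 * k)) (Fin (2 * k)) ℝ)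
    (A A' : Matrix (Fin d) (Fin (2 * k)) ℝ) (B B' : Matrix (Fin d) (Fin d) ℝ) :
    PsiBI S A B * fromBlocks N 0 0 0 * PsiBI S' A' B' =
      fromBlocks (S * N * S') (S * N * A'ᵀ) (A * N * S') (A * N * A'ᵀ) := by
  simp [PsiBI, fromBlocks_multiply]

theorem PsiBI_injective {S S' : Matrix (Fin (2 * k)) (Fin (2 * k)) ℝ}
    {A A' : Matrix (Fin d) (Fin (2 * k)) ℝ} {B B' : Matrix (Fin d) (Fin d) ℝ}
    (h : PsiBI S A B = PsiBI S' A' B') : S = S' ∧ A = A' ∧ B = B' := by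
  obtain ⟨hS, -, hA, hB⟩ := fromBlocks_inj.mp h
  exact ⟨hS, hA, smul_right_injective _ two_ne_zero hB⟩

theorem exists_PsiBI_eq_of_transpose_eq
    {X : Matrix (Fin (2 * k) ⊕ Fin d) (Fin (2 * k) ⊕ Fin d) ℝ} (hX : Xᵀ = X) :
    ∃ S A B, Sᵀ = S ∧ Bᵀ = B ∧ PsiBI S A B = X := by
  have hblocks :
      (fromBlocks X.toBlocks₁₁ X.toBlocks₁₂ X.toBlocks₂₁ X.toBlocks₂₂).IsSymm := by
    rwa [fromBlocks_toBlocks]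
  obtain ⟨hS, -, h₁₂, hB⟩ := isSymm_fromBlocks_iff.mp hblocks
  refine ⟨X.toBlocks₁₁, X.toBlocks₂₁, (1 / 2 : ℝ) • X.toBlocks₂₂, hS,
    by rw [transpose_smul, hB], ?_⟩
  rw [PsiBI, h₁₂, smul_smul]
  norm_num
  exact fromBlocks_toBlocks X

theorem PsiBI_bracket {N S S' : Matrix (Fin (2 * k)) (Fin (2 * k)) ℝ} (hN : Nᵀ = -N)
    (hS : Sᵀ = S) (hS' : S'ᵀ = S') (A A' : Matrix (Fin d) (Fin (2 * k)) ℝ)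
    (B B' : Matrix (Fin d) (Fin d) ℝ) :
    PsiBI (S * N * S' - S' * N * S) (A * N * S' - A' * N * S) (symPart (A * N * A'ᵀ)) =
      PsiBI S A B * fromBlocks N 0 0 0 * PsiBI S' A' B' -
        PsiBI S' A' B' * fromBlocks N 0 0 0 * PsiBI S A B := by
  have h₁₂ : (A * N * S' - A' * N * S)ᵀ = S * N * A'ᵀ - S' * N * Aᵀ := by
    rw [transpose_sub, transpose_mul_mul_of_transpose_eq_neg hN,
      transpose_mul_mul_of_transpose_eq_neg hN, hS, hS', neg_sub_neg]
  have h₂₂ : (2 : ℝ) • symPart (A * N * A'ᵀ) = A * N * A'ᵀ - A' * N * Aᵀ := by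
    rw [two_smul_symPart, transpose_mul_mul_of_transpose_eq_neg hN, transpose_transpose,
      ← sub_eq_add_neg]
  rw [PsiBI_mul_fromBlocks_mul_PsiBI, PsiBI_mul_fromBlocks_mul_PsiBI, fromBlocks_sub, PsiBI,
    h₁₂, h₂₂]

end PsiBI

theorem psi_iso_general (k d : ℕ) (Nbar : Matrix (Fin (2 * k)) (Fin (2 * k)) ℝ)
    (hanti : Nbarᵀ = -Nbar) :
    (∀ (S : Matrix (Fin (2 * k)) (Fin (2 * k)) ℝ) (A : Matrix (Fin d) (Fin (2 * k)) ℝ)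
        (B : Matrix (Fin d) (Fin d) ℝ), Sᵀ = S → Bᵀ = B →
      (PsiBI S A B)ᵀ = PsiBI S A B) ∧
    (∀ (S S' : Matrix (Fin (2 * k)) (Fin (2 * k)) ℝ) (A A' : Matrix (Fin d) (Fin (2 * k)) ℝ)
        (B B' : Matrix (Fin d) (Fin d) ℝ), Sᵀ = S → S'ᵀ = S' → Bᵀ = B → B'ᵀ = B' →
      PsiBI (S * Nbar * S' - S' * Nbar * S) (A * Nbar * S' - A' * Nbar * S)
          (symPart (A * Nbar * A'ᵀ)) =
        PsiBI S A B * Matrix.fromBlocks Nbar 0 0 0 * PsiBI S' A' B' -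
          PsiBI S' A' B' * Matrix.fromBlocks Nbar 0 0 0 * PsiBI S A B) ∧
    (∀ (S S' : Matrix (Fin (2 * k)) (Fin (2 * k)) ℝ) (A A' : Matrix (Fin d) (Fin (2 * k)) ℝ)
        (B B' : Matrix (Fin d) (Fin d) ℝ),
      PsiBI S A B = PsiBI S' A' B' → S = S' ∧ A = A' ∧ B = B') ∧
    (∀ X : Matrix (Fin (2 * k) ⊕ Fin d) (Fin (2 * k) ⊕ Fin d) ℝ, Xᵀ = X →
      ∃ S A B, Sᵀ = S ∧ Bᵀ = B ∧ PsiBI S A B = X) := by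
  refine ⟨fun S A B hS hB => by rw [transpose_PsiBI, hS, hB],
    fun S S' A A' B B' hS hS' _ _ => PsiBI_bracket hanti hS hS' A A' B B',
    fun _ _ _ _ _ _ => PsiBI_injective, fun _ => exists_PsiBI_eq_of_transpose_eq⟩

/-- For an invertible antisymmetric `2k × 2k` matrix `N̄`, the map
`Ψ(S,A,B) = [[S, Aᵀ],[A, 2B]]` is a Lie algebra isomorphism from
`(Sym(ℝ^{2k}) ⋉ M_{d×2k}) ×_C Sym(ℝ^d)` with bracket
`[(S,A,B),(S',A',B')] = ([S,S']_N̄, A N̄ S' - A' N̄ S, (A N̄ A'ᵀ)^sym)`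
onto `(Sym(ℝ^{2k+d}), [·,·]_N)` with `N = diag(N̄, 0)`: it maps into the symmetric
matrices, takes the bracket to the `N`-bracket, and is a bijection. -/
theorem psi_iso (k d : ℕ) (Nbar : Matrix (Fin (2 * k)) (Fin (2 * k)) ℝ)
    (hanti : Nbarᵀ = -Nbar) (hinv : IsUnit Nbar.det) :
    (∀ (S : Matrix (Fin (2 * k)) (Fin (2 * k)) ℝ) (A : Matrix (Fin d) (Fin (2 * k)) ℝ)
        (B : Matrix (Fin d) (Fin d) ℝ), Sᵀ = S → Bᵀ = B →
      (PsiBI S A B)ᵀ = PsiBI S A B) ∧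
    (∀ (S S' : Matrix (Fin (2 * k)) (Fin (2 * k)) ℝ) (A A' : Matrix (Fin d) (Fin (2 * k)) ℝ)
        (B B' : Matrix (Fin d) (Fin d) ℝ), Sᵀ = S → S'ᵀ = S' → Bᵀ = B → B'ᵀ = B' →
      PsiBI (S * Nbar * S' - S' * Nbar * S) (A * Nbar * S' - A' * Nbar * S)
          (symPart (A * Nbar * A'ᵀ)) =
        PsiBI S A B * Matrix.fromBlocks Nbar 0 0 0 * PsiBI S' A' B' -
          PsiBI S' A' B' * Matrix.fromBlocks Nbar 0 0 0 * PsiBI S A B) ∧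
    (∀ (S S' : Matrix (Fin (2 * k)) (Fin (2 * k)) ℝ) (A A' : Matrix (Fin d) (Fin (2 * k)) ℝ)
        (B B' : Matrix (Fin d) (Fin d) ℝ),
      PsiBI S A B = PsiBI S' A' B' → S = S' ∧ A = A' ∧ B = B') ∧
    (∀ X : Matrix (Fin (2 * k) ⊕ Fin d) (Fin (2 * k) ⊕ Fin d) ℝ, Xᵀ = X →
      ∃ S A B, Sᵀ = S ∧ Bᵀ = B ∧ PsiBI S A B = X) :=
  psi_iso_general k d Nbar hanti
end

section
/- The map C((S,A),(S',A')) := (A N̄ A'^T)^{sym} is a Sym(R^d)-valued Lie algebra 2-cocycle on the semidirect product Lie algebra Sym(R^{2k}) ⋉ M_{d×2k}: it is bilinear, antisymmetric, and satisfies C([ξ,η],ζ) + C([ζ,ξ],η) + C([η,ζ],ξ) = 0 for all ξ,η,ζ. -/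
open Matrix

/-- The `Sym(ℝ^d)`-valued cocycle `C((S,A),(S',A')) = (A N̄ A'ᵀ)^sym`. -/
noncomputable def cocycleC {k d : ℕ} (Nbar : Matrix (Fin (2 * k)) (Fin (2 * k)) ℝ)
    (x y : Matrix (Fin (2 * k)) (Fin (2 * k)) ℝ × Matrix (Fin d) (Fin (2 * k)) ℝ) :
    Matrix (Fin d) (Fin d) ℝ :=
  symPart (x.2 * Nbar * y.2ᵀ)

/-- The semidirect product bracket `[(S,A),(S',A')] = ([S,S']_N̄, A N̄ S' - A' N̄ S)`
on `Sym(ℝ^{2k}) ⋉ M_{d×2k}`. -/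
noncomputable def sdBracket {k d : ℕ} (Nbar : Matrix (Fin (2 * k)) (Fin (2 * k)) ℝ)
    (x y : Matrix (Fin (2 * k)) (Fin (2 * k)) ℝ × Matrix (Fin d) (Fin (2 * k)) ℝ) :
    Matrix (Fin (2 * k)) (Fin (2 * k)) ℝ × Matrix (Fin d) (Fin (2 * k)) ℝ :=
  (x.1 * Nbar * y.1 - y.1 * Nbar * x.1, x.2 * Nbar * y.1 - y.2 * Nbar * x.1)

/- The cocycle identity reduces to one symmetry: for symmetric `S` and antisymmetric `N̄`,
the matrix `A N̄ S N̄ Bᵀ` has transpose `B N̄ S N̄ Aᵀ`, so both have the same symmetric part.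
Expanding the brackets, `C([ξ,η],ζ) = T(ξ,η,ζ) - T(η,ξ,ζ)` with
`T(x,y,z) = (A_x N̄ S_y N̄ A_zᵀ)^sym`, and the six terms of the cyclic sum cancel in pairs
under `T(x,y,z) = T(z,y,x)`. Antisymmetry of `C` is the same argument with `S` omitted. -/

section SymPart

variable {d : ℕ}

theorem transpose_symPart (M : Matrix (Fin d) (Fin d) ℝ) : (symPart M)ᵀ = symPart M := by
  simp only [symPart, transpose_smul, transpose_add, transpose_transpose, add_comm]

theorem symPart_transpose (M : Matrix (Fin d) (Fin d) ℝ) : symPart Mᵀ = symPart M := by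
  simp only [symPart, transpose_transpose, add_comm]

theorem symPart_add (M M' : Matrix (Fin d) (Fin d) ℝ) :
    symPart (M + M') = symPart M + symPart M' := by
  simp only [symPart, transpose_add]
  module

theorem symPart_sub (M M' : Matrix (Fin d) (Fin d) ℝ) :
    symPart (M - M') = symPart M - symPart M' := by
  simp only [symPart, transpose_sub]
  module

theorem symPart_smul (c : ℝ) (M : Matrix (Fin d) (Fin d) ℝ) :
    symPart (c • M) = c • symPart M := by
  simp only [symPart, transpose_smul]
  module

theorem symPart_neg (M : Matrix (Fin d) (Fin d) ℝ) : symPart (-M) = -symPart M := by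
  simpa using symPart_smul (-1) M

variable {n : Type*} [Fintype n] {N : Matrix n n ℝ}

theorem symPart_mul_antisymm_mul_transpose (hN : Nᵀ = -N) (A B : Matrix (Fin d) n ℝ) :
    symPart (A * N * Bᵀ) = -symPart (B * N * Aᵀ) := by
  rw [← symPart_neg, ← symPart_transpose]
  simp only [transpose_mul, transpose_transpose, hN, Matrix.mul_neg, Matrix.neg_mul,
    Matrix.mul_assoc]

theorem symPart_sandwich_swap (hN : Nᵀ = -N) {S : Matrix n n ℝ} (hS : Sᵀ = S)
    (A B : Matrix (Fin d) n ℝ) :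
    symPart (A * N * S * N * Bᵀ) = symPart (B * N * S * N * Aᵀ) := by
  rw [← symPart_transpose]
  simp only [transpose_mul, transpose_transpose, hN, hS, Matrix.mul_neg, Matrix.neg_mul,
    neg_neg, Matrix.mul_assoc]

end SymPart

section Cocycle

variable {k d : ℕ} (Nbar : Matrix (Fin (2 * k)) (Fin (2 * k)) ℝ)
  (x x' y : Matrix (Fin (2 * k)) (Fin (2 * k)) ℝ × Matrix (Fin d) (Fin (2 * k)) ℝ)

theorem cocycleC_add_left : cocycleC Nbar (x + x') y = cocycleC Nbar x y + cocycleC Nbar x' y := by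
  simp only [cocycleC, Prod.snd_add, Matrix.add_mul, symPart_add]

theorem cocycleC_add_right :
    cocycleC Nbar y (x + x') = cocycleC Nbar y x + cocycleC Nbar y x' := by
  simp only [cocycleC, Prod.snd_add, transpose_add, Matrix.mul_add, symPart_add]

theorem cocycleC_smul_left (c : ℝ) : cocycleC Nbar (c • x) y = c • cocycleC Nbar x y := by
  simp only [cocycleC, Prod.smul_snd, Matrix.smul_mul, symPart_smul]

theorem cocycleC_smul_right (c : ℝ) : cocycleC Nbar y (c • x) = c • cocycleC Nbar y x := by
  simp only [cocycleC, Prod.smul_snd, transpose_smul, Matrix.mul_smul, symPart_smul]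

variable {Nbar}

theorem cocycleC_swap (hanti : Nbarᵀ = -Nbar) : cocycleC Nbar x y = -cocycleC Nbar y x :=
  symPart_mul_antisymm_mul_transpose hanti x.2 y.2

theorem cocycleC_sdBracket_left
    (ξ η ζ : Matrix (Fin (2 * k)) (Fin (2 * k)) ℝ × Matrix (Fin d) (Fin (2 * k)) ℝ) :
    cocycleC Nbar (sdBracket Nbar ξ η) ζ =
      symPart (ξ.2 * Nbar * η.1 * Nbar * ζ.2ᵀ) - symPart (η.2 * Nbar * ξ.1 * Nbar * ζ.2ᵀ) := by
  simp only [cocycleC, sdBracket, Matrix.sub_mul, symPart_sub]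

theorem cocycleC_sdBracket_cyclic (hanti : Nbarᵀ = -Nbar)
    (ξ η ζ : Matrix (Fin (2 * k)) (Fin (2 * k)) ℝ × Matrix (Fin d) (Fin (2 * k)) ℝ)
    (hξ : ξ.1ᵀ = ξ.1) (hη : η.1ᵀ = η.1) (hζ : ζ.1ᵀ = ζ.1) :
    cocycleC Nbar (sdBracket Nbar ξ η) ζ + cocycleC Nbar (sdBracket Nbar ζ ξ) η +
      cocycleC Nbar (sdBracket Nbar η ζ) ξ = 0 := by
  simp only [cocycleC_sdBracket_left]
  rw [symPart_sandwich_swap hanti hη ζ.2, symPart_sandwich_swap hanti hξ η.2,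
    symPart_sandwich_swap hanti hζ ξ.2]
  abel

end Cocycle

theorem cocycle_property_general (k d : ℕ) (Nbar : Matrix (Fin (2 * k)) (Fin (2 * k)) ℝ)
    (hanti : Nbarᵀ = -Nbar) :
    (∀ x y : Matrix (Fin (2 * k)) (Fin (2 * k)) ℝ × Matrix (Fin d) (Fin (2 * k)) ℝ,
      (cocycleC Nbar x y)ᵀ = cocycleC Nbar x y) ∧
    (∀ (x x' y : Matrix (Fin (2 * k)) (Fin (2 * k)) ℝ × Matrix (Fin d) (Fin (2 * k)) ℝ)
        (c : ℝ),
      cocycleC Nbar (x + x') y = cocycleC Nbar x y + cocycleC Nbar x' y ∧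
      cocycleC Nbar y (x + x') = cocycleC Nbar y x + cocycleC Nbar y x' ∧
      cocycleC Nbar (c • x) y = c • cocycleC Nbar x y ∧
      cocycleC Nbar y (c • x) = c • cocycleC Nbar y x) ∧
    (∀ x y : Matrix (Fin (2 * k)) (Fin (2 * k)) ℝ × Matrix (Fin d) (Fin (2 * k)) ℝ,
      cocycleC Nbar x y = -cocycleC Nbar y x) ∧
    (∀ ξ η ζ : Matrix (Fin (2 * k)) (Fin (2 * k)) ℝ × Matrix (Fin d) (Fin (2 * k)) ℝ,
      ξ.1ᵀ = ξ.1 → η.1ᵀ = η.1 → ζ.1ᵀ = ζ.1 →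
      cocycleC Nbar (sdBracket Nbar ξ η) ζ + cocycleC Nbar (sdBracket Nbar ζ ξ) η +
        cocycleC Nbar (sdBracket Nbar η ζ) ξ = 0) := by
  refine ⟨fun x y ↦ transpose_symPart _, fun x x' y c ↦ ?_, fun x y ↦ cocycleC_swap x y hanti,
    fun ξ η ζ ↦ cocycleC_sdBracket_cyclic hanti ξ η ζ⟩
  exact ⟨cocycleC_add_left Nbar x x' y, cocycleC_add_right Nbar x x' y,
    cocycleC_smul_left Nbar x y c, cocycleC_smul_right Nbar x y c⟩

/-- `C((S,A),(S',A')) = (A N̄ A'ᵀ)^sym` is a `Sym(ℝ^d)`-valued Lie algebra 2-cocycle on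
the semidirect product Lie algebra `Sym(ℝ^{2k}) ⋉ M_{d×2k}`: it takes values in the
symmetric matrices, is bilinear, antisymmetric, and satisfies the cocycle identity
`C([ξ,η],ζ) + C([ζ,ξ],η) + C([η,ζ],ξ) = 0`. -/
theorem cocycle_property (k d : ℕ) (Nbar : Matrix (Fin (2 * k)) (Fin (2 * k)) ℝ)
    (hanti : Nbarᵀ = -Nbar) (hinv : IsUnit Nbar.det) :
    (∀ x y : Matrix (Fin (2 * k)) (Fin (2 * k)) ℝ × Matrix (Fin d) (Fin (2 * k)) ℝ,
      (cocycleC Nbar x y)ᵀ = cocycleC Nbar x y) ∧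
    (∀ (x x' y : Matrix (Fin (2 * k)) (Fin (2 * k)) ℝ × Matrix (Fin d) (Fin (2 * k)) ℝ)
        (c : ℝ),
      cocycleC Nbar (x + x') y = cocycleC Nbar x y + cocycleC Nbar x' y ∧
      cocycleC Nbar y (x + x') = cocycleC Nbar y x + cocycleC Nbar y x' ∧
      cocycleC Nbar (c • x) y = c • cocycleC Nbar x y ∧
      cocycleC Nbar y (c • x) = c • cocycleC Nbar y x) ∧
    (∀ x y : Matrix (Fin (2 * k)) (Fin (2 * k)) ℝ × Matrix (Fin d) (Fin (2 * k)) ℝ,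
      cocycleC Nbar x y = -cocycleC Nbar y x) ∧
    (∀ ξ η ζ : Matrix (Fin (2 * k)) (Fin (2 * k)) ℝ × Matrix (Fin d) (Fin (2 * k)) ℝ,
      ξ.1ᵀ = ξ.1 → η.1ᵀ = η.1 → ζ.1ᵀ = ζ.1 →
      cocycleC Nbar (sdBracket Nbar ξ η) ζ + cocycleC Nbar (sdBracket Nbar ζ ξ) η +
        cocycleC Nbar (sdBracket Nbar η ζ) ξ = 0) :=
  cocycle_property_general k d Nbar hanti
end

section
/- Let (V,Ω) be a symplectic vector space with Poisson tensor Π (so Π^♯ = (Ω^♭)^{-1} : V* → V). The map Γ(σ,α,β) := (Π^♯∘σ, Π^♯(α), β) is a Lie algebra isomorphism from (Sym(V) ⋉ V*) ×_C R, with bracket [(σ,α,β),(σ',α',β')] = (σ∘Π^♯∘σ' - σ'∘Π^♯∘σ, α∘Π^♯∘σ' - α'∘Π^♯∘σ, Π(α,α')), onto the Jacobi Lie algebra jac(V,Ω) = sp(V,Ω) ⋉ (V ×_Ω R) with bracket [(S₂,S₁,S₀),(S₂',S₁',S₀')] = ([S₂,S₂'], S₂S₁' - S₂'S₁, Ω(S₁,S₁')).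 -/
/-! Since `Ω ∘ P = id` and `P ∘ Ω = id`, the map `σ ↦ P ∘ σ` identifies bilinear forms with
endomorphisms, and `σ(u, v) = Ω(Pσu, v)` shows that `σ` is symmetric exactly when `P ∘ σ` is
infinitesimally symplectic. For symmetric `σ` and skew `Ω` one has `α ∘ P ∘ σ = -σ(Pα)`, which
turns the source bracket componentwise into the Jacobi bracket. -/

/-- Membership in the symplectic Lie algebra: `Ω(Su, v) + Ω(u, Sv) = 0`. -/
noncomputable def InSp {V : Type*} [AddCommGroup V] [Module ℝ V]
    (Ω : V →ₗ[ℝ] V →ₗ[ℝ] ℝ) (S : V →ₗ[ℝ] V) : Prop :=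
  ∀ u v : V, Ω (S u) v + Ω u (S v) = 0

/-- The Jacobi Lie algebra bracket on `sp(V,Ω) × V × ℝ`. -/
noncomputable def jacBracket {V : Type*} [AddCommGroup V] [Module ℝ V]
    (Ω : V →ₗ[ℝ] V →ₗ[ℝ] ℝ) (x y : (V →ₗ[ℝ] V) × V × ℝ) : (V →ₗ[ℝ] V) × V × ℝ :=
  (x.1 ∘ₗ y.1 - y.1 ∘ₗ x.1, (x.1 y.2.1 - y.1 x.2.1, Ω x.2.1 y.2.1))

/-- The bracket of `(Sym(V) ⋉ V*) ×_C ℝ`, where `P = Π^♯`: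
`[(σ,α,β),(σ',α',β')] = (σ∘P∘σ' - σ'∘P∘σ, α∘P∘σ' - α'∘P∘σ, Π(α,α'))` with
`Π(α,α') = α(P α')`. -/
noncomputable def srcBracket {V : Type*} [AddCommGroup V] [Module ℝ V]
    (P : (V →ₗ[ℝ] ℝ) →ₗ[ℝ] V)
    (x y : (V →ₗ[ℝ] V →ₗ[ℝ] ℝ) × (V →ₗ[ℝ] ℝ) × ℝ) :
    (V →ₗ[ℝ] V →ₗ[ℝ] ℝ) × (V →ₗ[ℝ] ℝ) × ℝ :=
  (x.1 ∘ₗ (P ∘ₗ y.1) - y.1 ∘ₗ (P ∘ₗ x.1),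
    (x.2.1 ∘ₗ (P ∘ₗ y.1) - y.2.1 ∘ₗ (P ∘ₗ x.1), x.2.1 (P y.2.1)))

/-- The map `Γ(σ,α,β) = (P∘σ, P(α), β)` into the Jacobi Lie algebra. -/
noncomputable def GammaJac {V : Type*} [AddCommGroup V] [Module ℝ V]
    (P : (V →ₗ[ℝ] ℝ) →ₗ[ℝ] V)
    (x : (V →ₗ[ℝ] V →ₗ[ℝ] ℝ) × (V →ₗ[ℝ] ℝ) × ℝ) : (V →ₗ[ℝ] V) × V × ℝ :=
  (P ∘ₗ x.1, (P x.2.1, x.2.2))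

section Symplectic

variable {V : Type*} [AddCommGroup V] [Module ℝ V] {Ω : V →ₗ[ℝ] V →ₗ[ℝ] ℝ}
  {P : (V →ₗ[ℝ] ℝ) →ₗ[ℝ] V}

theorem flat_sharp (hP₁ : ∀ (α : V →ₗ[ℝ] ℝ) (v : V), Ω (P α) v = α v) (α : V →ₗ[ℝ] ℝ) :
    Ω (P α) = α :=
  LinearMap.ext (hP₁ α)

theorem sharp_injective (hP₁ : ∀ (α : V →ₗ[ℝ] ℝ) (v : V), Ω (P α) v = α v) :
    Function.Injective P :=
  Function.LeftInverse.injective (flat_sharp hP₁)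

theorem inSp_sharp_comp (hskew : ∀ u v : V, Ω u v = -Ω v u)
    (hP₁ : ∀ (α : V →ₗ[ℝ] ℝ) (v : V), Ω (P α) v = α v) {σ : V →ₗ[ℝ] V →ₗ[ℝ] ℝ}
    (hσ : ∀ u v : V, σ u v = σ v u) : InSp Ω (P ∘ₗ σ) := by
  intro u v
  rw [LinearMap.comp_apply, LinearMap.comp_apply, hP₁, hskew u, hP₁, hσ]
  ring

theorem symm_flat_comp (hskew : ∀ u v : V, Ω u v = -Ω v u) {S : V →ₗ[ℝ] V}
    (hS : InSp Ω S) (u v : V) : (Ω ∘ₗ S) u v = (Ω ∘ₗ S) v u := by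
  have h := hS u v
  rw [hskew u] at h
  simp only [LinearMap.comp_apply]
  linarith

theorem covector_comp_sharp_comp (hskew : ∀ u v : V, Ω u v = -Ω v u)
    (hP₁ : ∀ (α : V →ₗ[ℝ] ℝ) (v : V), Ω (P α) v = α v) {σ : V →ₗ[ℝ] V →ₗ[ℝ] ℝ}
    (hσ : ∀ u v : V, σ u v = σ v u) (α : V →ₗ[ℝ] ℝ) :
    α ∘ₗ (P ∘ₗ σ) = -σ (P α) := by
  ext v
  rw [LinearMap.comp_apply, LinearMap.comp_apply, LinearMap.neg_apply, ← hP₁ α, hskew,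
    hP₁, hσ]

theorem gammaJac_srcBracket (hskew : ∀ u v : V, Ω u v = -Ω v u)
    (hP₁ : ∀ (α : V →ₗ[ℝ] ℝ) (v : V), Ω (P α) v = α v)
    {x y : (V →ₗ[ℝ] V →ₗ[ℝ] ℝ) × (V →ₗ[ℝ] ℝ) × ℝ}
    (hx : ∀ u v : V, x.1 u v = x.1 v u) (hy : ∀ u v : V, y.1 u v = y.1 v u) :
    GammaJac P (srcBracket P x y) = jacBracket Ω (GammaJac P x) (GammaJac P y) := by
  simp only [GammaJac, srcBracket, jacBracket, Prod.mk.injEq]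
  refine ⟨?_, ?_, (hP₁ _ _).symm⟩
  · rw [LinearMap.comp_sub, LinearMap.comp_assoc, LinearMap.comp_assoc]
  · rw [covector_comp_sharp_comp hskew hP₁ hy, covector_comp_sharp_comp hskew hP₁ hx, map_sub,
      map_neg, map_neg, LinearMap.comp_apply, LinearMap.comp_apply]
    abel

theorem gammaJac_injective (hP₁ : ∀ (α : V →ₗ[ℝ] ℝ) (v : V), Ω (P α) v = α v) :
    Function.Injective (GammaJac P) := by
  rintro ⟨σ, α, β⟩ ⟨σ', α', β'⟩ h
  simp only [GammaJac, Prod.mk.injEq, LinearMap.cancel_left (sharp_injective hP₁)] at h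
  obtain ⟨hσ, hα, hβ⟩ := h
  rw [hσ, sharp_injective hP₁ hα, hβ]

theorem gammaJac_flat (hP₂ : ∀ u : V, P (Ω u) = u) (z : (V →ₗ[ℝ] V) × V × ℝ) :
    GammaJac P (Ω ∘ₗ z.1, Ω z.2.1, z.2.2) = z := by
  have hPΩ : P ∘ₗ Ω = LinearMap.id := LinearMap.ext hP₂
  simp only [GammaJac, ← LinearMap.comp_assoc, hPΩ, LinearMap.id_comp, hP₂]

end Symplectic

/-- Let `(V,Ω)` be a symplectic vector space with Poisson tensor `Π`, so that
`P = Π^♯ = (Ω^♭)⁻¹`.  The map `Γ(σ,α,β) = (Π^♯∘σ, Π^♯(α), β)` is a Lie algebra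
isomorphism from `(Sym(V) ⋉ V*) ×_C ℝ` onto the Jacobi Lie algebra
`jac(V,Ω) = sp(V,Ω) ⋉ (V ×_Ω ℝ)`: it maps symmetric `σ` into `sp(V,Ω)`, takes the
source bracket to the Jacobi bracket, and is a bijection onto triples
`(S₂,S₁,S₀)` with `S₂ ∈ sp(V,Ω)`. -/
theorem gamma_jacobi_iso (V : Type*) [AddCommGroup V] [Module ℝ V]
    (Ω : V →ₗ[ℝ] V →ₗ[ℝ] ℝ) (hskew : ∀ u v : V, Ω u v = -Ω v u)
    (P : (V →ₗ[ℝ] ℝ) →ₗ[ℝ] V)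
    (hP₁ : ∀ (α : V →ₗ[ℝ] ℝ) (v : V), Ω (P α) v = α v)
    (hP₂ : ∀ u : V, P (Ω u) = u) :
    (∀ x : (V →ₗ[ℝ] V →ₗ[ℝ] ℝ) × (V →ₗ[ℝ] ℝ) × ℝ,
      (∀ u v : V, x.1 u v = x.1 v u) → InSp Ω (GammaJac P x).1) ∧
    (∀ x y : (V →ₗ[ℝ] V →ₗ[ℝ] ℝ) × (V →ₗ[ℝ] ℝ) × ℝ,
      (∀ u v : V, x.1 u v = x.1 v u) → (∀ u v : V, y.1 u v = y.1 v u) →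
      GammaJac P (srcBracket P x y) = jacBracket Ω (GammaJac P x) (GammaJac P y)) ∧
    (∀ x y : (V →ₗ[ℝ] V →ₗ[ℝ] ℝ) × (V →ₗ[ℝ] ℝ) × ℝ,
      GammaJac P x = GammaJac P y → x = y) ∧
    (∀ z : (V →ₗ[ℝ] V) × V × ℝ, InSp Ω z.1 →
      ∃ x : (V →ₗ[ℝ] V →ₗ[ℝ] ℝ) × (V →ₗ[ℝ] ℝ) × ℝ,
        (∀ u v : V, x.1 u v = x.1 v u) ∧ GammaJac P x = z) :=
  ⟨fun _ hx => inSp_sharp_comp hskew hP₁ hx,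
    fun _ _ hx hy => gammaJac_srcBracket hskew hP₁ hx hy,
    fun _ _ h => gammaJac_injective hP₁ h,
    fun z hz => ⟨_, symm_flat_comp hskew hz, gammaJac_flat hP₂ z⟩⟩
end
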